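/- For odd L, the quantity Φ* = 2^{1-L} ∑_{k=0}^{(L-1)/2} (-1)^k binomial(L, (L+1)/2 + k) satisfies Φ* = ((L+1)/(L·2^L))·binomial(L, (L+1)/2), and Φ* = Θ(1/√L); in particular there exist constants c₁, c₂ > 0 with c₁/√L ≤ Φ* ≤ c₂/√L for all odd L ≥ 1. -/

import Mathlib

open Finset

/-- The expansion `Φ* = 2^{1-L} ∑_{k=0}^{(L-1)/2} (-1)^k binomial(L, (L+1)/2 + k)`
of the `N = 2` nonlocal Markov chain for odd `L`. -/
noncomputable def PhiStar (L : ℕ) : ℝ :=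
  (2 : ℝ) ^ (1 - (L : ℤ)) * ∑ k ∈ Finset.range ((L - 1) / 2 + 1),
    (-1 : ℝ) ^ k * (L.choose ((L + 1) / 2 + k))

private lemma alt_partial (n : ℕ) (r : ℕ) :
    ∑ i ∈ range (r + 1), (-1 : ℝ) ^ i * ((n + 1).choose i) = (-1) ^ r * (n.choose r) := by
  induction r with
  | zero => simp
  | succ r ih =>
    rw [Finset.sum_range_succ, ih, Nat.choose_succ_succ' n r]
    push_cast
    ring

private lemma sum_phi (m : ℕ) :
    ∑ k ∈ range (m + 1), (-1 : ℝ) ^ k * ((2 * m + 1).choose (m + 1 + k))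
      = m.centralBinom := by
  rw [← Finset.sum_range_reflect]
  have h : ∀ k ∈ range (m + 1),
      (-1 : ℝ) ^ (m + 1 - 1 - k) * (((2 * m + 1).choose (m + 1 + (m + 1 - 1 - k))) : ℝ)
        = (-1 : ℝ) ^ m * ((-1 : ℝ) ^ k * ((2 * m + 1).choose k)) := by
    intro k hk
    have hk' : k ≤ m := Nat.lt_succ_iff.mp (Finset.mem_range.mp hk)
    have h2 : m + 1 + (m + 1 - 1 - k) = 2 * m + 1 - k := by omega
    have h3 : m + 1 - 1 - k = m - k := by omega
    rw [h2, h3, Nat.choose_symm (by omega)]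
    have hsgn : (-1 : ℝ) ^ m = (-1 : ℝ) ^ (m - k) * (-1 : ℝ) ^ k := by
      rw [← pow_add, Nat.sub_add_cancel hk']
    have hkk : (-1 : ℝ) ^ k * (-1 : ℝ) ^ k = 1 := by
      rw [← pow_add, ← two_mul, pow_mul]; norm_num
    calc (-1 : ℝ) ^ (m - k) * (((2 * m + 1).choose k : ℕ) : ℝ)
        = (-1 : ℝ) ^ (m - k) * ((((-1 : ℝ) ^ k * (-1 : ℝ) ^ k)) * ((2 * m + 1).choose k)) := by
          rw [hkk, one_mul]
      _ = (-1 : ℝ) ^ m * ((-1 : ℝ) ^ k * ((2 * m + 1).choose k)) := by rw [hsgn]; ring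
  rw [Finset.sum_congr rfl h, ← Finset.mul_sum, alt_partial (2 * m) m, ← mul_assoc,
    ← pow_add, ← two_mul, pow_mul]
  norm_num
  rw [Nat.centralBinom_eq_two_mul_choose]

private lemma phiStar_eq (m : ℕ) : PhiStar (2 * m + 1) = (m.centralBinom : ℝ) / 4 ^ m := by
  unfold PhiStar
  have e1 : (2 * m + 1 - 1) / 2 = m := by omega
  have e2 : (2 * m + 1 + 1) / 2 = m + 1 := by omega
  rw [e1, e2, sum_phi m]
  have e4 : (1 - ((2 * m + 1 : ℕ) : ℤ)) = -((2 * m : ℕ) : ℤ) := by push_cast; ring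
  rw [e4, zpow_neg, zpow_natCast, pow_mul]
  norm_num
  rw [inv_mul_eq_div]

private lemma sqrt_helper {x y u v : ℝ} (hx : 0 ≤ x) (hu : 0 ≤ u)
    (h : x ^ 2 * y ≤ u ^ 2 * v) : x * Real.sqrt y ≤ u * Real.sqrt v := by
  have h1 : x * Real.sqrt y = Real.sqrt (x ^ 2 * y) := by
    rw [Real.sqrt_mul (sq_nonneg x), Real.sqrt_sq hx]
  have h2 : u * Real.sqrt v = Real.sqrt (u ^ 2 * v) := by
    rw [Real.sqrt_mul (sq_nonneg u), Real.sqrt_sq hu]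
  rw [h1, h2]
  exact Real.sqrt_le_sqrt h

private lemma upper_bound (m : ℕ) :
    (m.centralBinom : ℝ) / 4 ^ m ≤ 1 / Real.sqrt (2 * (m : ℝ) + 1) := by
  induction m with
  | zero => simp [Nat.centralBinom]
  | succ m ih =>
    have hrec : ((m : ℝ) + 1) * ((m + 1).centralBinom : ℝ)
        = 2 * (2 * (m : ℝ) + 1) * (m.centralBinom : ℝ) := by
      exact_mod_cast Nat.succ_mul_centralBinom_succ m
    have hs1 : (0 : ℝ) < Real.sqrt (2 * (m : ℝ) + 1) := Real.sqrt_pos.mpr (by positivity)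
    have hs2 : (0 : ℝ) < Real.sqrt (2 * ((m : ℝ) + 1) + 1) := Real.sqrt_pos.mpr (by positivity)
    have h1 : (m.centralBinom : ℝ) * Real.sqrt (2 * (m : ℝ) + 1) ≤ 4 ^ m := by
      rw [div_le_div_iff₀ (by positivity) hs1] at ih
      linarith
    have key : (2 * (m : ℝ) + 1) * Real.sqrt (2 * ((m : ℝ) + 1) + 1)
        ≤ (2 * (m : ℝ) + 2) * Real.sqrt (2 * (m : ℝ) + 1) := by
      apply sqrt_helper (by positivity) (by positivity)
      nlinarith [sq_nonneg ((m : ℝ))]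
    have hcb : (0 : ℝ) ≤ (m.centralBinom : ℝ) := by positivity
    have hm1 : (0 : ℝ) < (m : ℝ) + 1 := by positivity
    push_cast
    rw [div_le_div_iff₀ (by positivity) hs2]
    have main : ((m : ℝ) + 1) * (((m + 1).centralBinom : ℝ) * Real.sqrt (2 * ((m : ℝ) + 1) + 1))
        ≤ ((m : ℝ) + 1) * (4 ^ (m + 1) * 1) := by
      calc ((m : ℝ) + 1) * (((m + 1).centralBinom : ℝ) * Real.sqrt (2 * ((m : ℝ) + 1) + 1))
          = 2 * (m.centralBinom : ℝ) * ((2 * (m : ℝ) + 1) * Real.sqrt (2 * ((m : ℝ) + 1) + 1)) := by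
            rw [← mul_assoc, hrec]; ring
        _ ≤ 2 * (m.centralBinom : ℝ) * ((2 * (m : ℝ) + 2) * Real.sqrt (2 * (m : ℝ) + 1)) := by
            apply mul_le_mul_of_nonneg_left key (by positivity)
        _ = (2 * (2 * (m : ℝ) + 2)) * ((m.centralBinom : ℝ) * Real.sqrt (2 * (m : ℝ) + 1)) := by
            ring
        _ ≤ (2 * (2 * (m : ℝ) + 2)) * 4 ^ m := by
            apply mul_le_mul_of_nonneg_left h1 (by positivity)
        _ = ((m : ℝ) + 1) * (4 ^ (m + 1) * 1) := by ring
    have := (mul_le_mul_iff_right₀ hm1).mp main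
    push_cast at this
    linarith
private lemma lower_bound (m : ℕ) (hm : 1 ≤ m) :
    (1 / 2) / Real.sqrt (2 * (m : ℝ)) ≤ (m.centralBinom : ℝ) / 4 ^ m := by
  induction m, hm using Nat.le_induction with
  | base =>
    have h1 : (1 : ℝ) ≤ Real.sqrt 2 := by
      nlinarith [Real.sq_sqrt (show (0:ℝ) ≤ 2 by norm_num), Real.sqrt_nonneg 2]
    have step : (1 / 2 : ℝ) / Real.sqrt (2 * ((1 : ℕ) : ℝ)) ≤ 1 / 2 := by
      rw [show (2 * ((1 : ℕ) : ℝ)) = 2 by norm_num]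
      calc (1 / 2 : ℝ) / Real.sqrt 2 ≤ (1 / 2) / 1 := by
            apply div_le_div_of_nonneg_left (by norm_num) (by norm_num) h1
        _ = 1 / 2 := by norm_num
    refine step.trans ?_
    norm_num [Nat.centralBinom]
  | succ m hm ih =>
    have hrec : ((m : ℝ) + 1) * ((m + 1).centralBinom : ℝ)
        = 2 * (2 * (m : ℝ) + 1) * (m.centralBinom : ℝ) := by
      exact_mod_cast Nat.succ_mul_centralBinom_succ m
    have hmpos : (0 : ℝ) < (m : ℝ) := by exact_mod_cast hm
    have hs1 : (0 : ℝ) < Real.sqrt (2 * (m : ℝ)) := Real.sqrt_pos.mpr (by positivity)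
    have hs2 : (0 : ℝ) < Real.sqrt (2 * ((m : ℝ) + 1)) := Real.sqrt_pos.mpr (by positivity)
    have h1 : (1 / 2 : ℝ) * 4 ^ m ≤ (m.centralBinom : ℝ) * Real.sqrt (2 * (m : ℝ)) := by
      rw [div_le_div_iff₀ hs1 (by positivity)] at ih
      linarith
    have key : (2 * (m : ℝ) + 2) * Real.sqrt (2 * (m : ℝ))
        ≤ (2 * (m : ℝ) + 1) * Real.sqrt (2 * ((m : ℝ) + 1)) := by
      apply sqrt_helper (by positivity) (by positivity)
      nlinarith [sq_nonneg ((m : ℝ))]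
    have hcb : (0 : ℝ) ≤ (m.centralBinom : ℝ) := by positivity
    have hm1 : (0 : ℝ) < (m : ℝ) + 1 := by positivity
    push_cast
    rw [div_le_div_iff₀ hs2 (by positivity)]
    have main : ((m : ℝ) + 1) * ((1 / 2 : ℝ) * 4 ^ (m + 1))
        ≤ ((m : ℝ) + 1) * (((m + 1).centralBinom : ℝ) * Real.sqrt (2 * ((m : ℝ) + 1))) := by
      calc ((m : ℝ) + 1) * ((1 / 2 : ℝ) * 4 ^ (m + 1))
          = (2 * (2 * (m : ℝ) + 2)) * ((1 / 2 : ℝ) * 4 ^ m) := by ring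
        _ ≤ (2 * (2 * (m : ℝ) + 2)) * ((m.centralBinom : ℝ) * Real.sqrt (2 * (m : ℝ))) := by
            apply mul_le_mul_of_nonneg_left h1 (by positivity)
        _ = 2 * (m.centralBinom : ℝ) * ((2 * (m : ℝ) + 2) * Real.sqrt (2 * (m : ℝ))) := by ring
        _ ≤ 2 * (m.centralBinom : ℝ) * ((2 * (m : ℝ) + 1) * Real.sqrt (2 * ((m : ℝ) + 1))) := by
            apply mul_le_mul_of_nonneg_left key (by positivity)
        _ = ((m : ℝ) + 1) * (((m + 1).centralBinom : ℝ) * Real.sqrt (2 * ((m : ℝ) + 1))) := by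
            linear_combination (-Real.sqrt (2 * ((m : ℝ) + 1))) * hrec
    have := (mul_le_mul_iff_right₀ hm1).mp main
    push_cast at this
    linarith

/-- For odd `L`, `Φ*` has the closed form `((L+1)/(L·2^L))·binomial(L, (L+1)/2)`,
and `Φ* = Θ(1/√L)`: there are constants `c₁, c₂ > 0` with
`c₁/√L ≤ Φ* ≤ c₂/√L` for all odd `L ≥ 1`. -/
theorem phiStar_closed_form_and_order :
    (∀ L : ℕ, Odd L →
      PhiStar L = ((L : ℝ) + 1) / ((L : ℝ) * 2 ^ L) * (L.choose ((L + 1) / 2))) ∧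
    ∃ c₁ c₂ : ℝ, 0 < c₁ ∧ 0 < c₂ ∧ ∀ L : ℕ, Odd L → 1 ≤ L →
      c₁ / Real.sqrt L ≤ PhiStar L ∧ PhiStar L ≤ c₂ / Real.sqrt L := by
  constructor
  · intro L hL
    obtain ⟨m, hm⟩ := hL
    have hm' : L = 2 * m + 1 := by omega
    subst hm'
    rw [phiStar_eq]
    have e2 : (2 * m + 1 + 1) / 2 = m + 1 := by omega
    rw [e2]
    have hch : (2 * (m : ℝ) + 1) * ((2 * m).choose m : ℝ)
        = ((2 * m + 1).choose (m + 1) : ℝ) * ((m : ℝ) + 1) := by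
      exact_mod_cast Nat.add_one_mul_choose_eq (2 * m) m
    have hcb : (m.centralBinom : ℝ) = ((2 * m).choose m : ℝ) := by
      rw [Nat.centralBinom_eq_two_mul_choose]
    have hp : (2 : ℝ) ^ (2 * m + 1) = 2 * 4 ^ m := by
      rw [pow_succ, pow_mul]; norm_num; ring
    rw [hcb]
    push_cast
    rw [hp]
    have h4 : (0 : ℝ) < 4 ^ m := by positivity
    field_simp
    nlinarith [hch, h4, sq_nonneg ((m:ℝ))]
  · refine ⟨1 / 2, 1, by norm_num, by norm_num, ?_⟩
    intro L hL hL1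
    obtain ⟨m, hm⟩ := hL
    have hm' : L = 2 * m + 1 := by omega
    subst hm'
    rw [phiStar_eq]
    have hc : ((2 * m + 1 : ℕ) : ℝ) = 2 * (m : ℝ) + 1 := by push_cast; ring
    rw [hc]
    constructor
    · rcases Nat.eq_zero_or_pos m with h0 | h1
      · subst h0
        norm_num [Nat.centralBinom]
      · have step1 : (1 / 2 : ℝ) / Real.sqrt (2 * (m : ℝ) + 1)
            ≤ (1 / 2 : ℝ) / Real.sqrt (2 * (m : ℝ)) := by
          have hmpos : (0 : ℝ) < (m : ℝ) := by exact_mod_cast h1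
          apply div_le_div_of_nonneg_left (by norm_num)
            (Real.sqrt_pos.mpr (by linarith)) (Real.sqrt_le_sqrt (by linarith))
        exact step1.trans (lower_bound m h1)
    · exact upper_bound m
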